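/- The canonical basis of the Banach space $(\oplus_{n=1}^\infty \ell_2^n)_{\ell_p}$, for $1<p<\infty$, $p\ne2$, is an unconditional basis which is not democratic. -/

import Mathlib

/-!
Both norms, that of `ℓ₂ⁿ` and that of the outer `ℓ_p`-sum, depend only on the absolute values
of the coordinates, so changing the signs of the coefficients is an isometry: the basis is
`1`-unconditional. It is not democratic because `N + 1` vectors taken from one block span a copy
of `ℓ₂^{N+1}` and sum to norm `(N + 1)^{1/2}`, while `N + 1` vectors taken from distinct blocks span
a copy of `ℓ_p^{N+1}` and sum to norm `(N + 1)^{1/p}`; for `p ≠ 2` the ratio is unbounded.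
-/

open scoped ENNReal

noncomputable section

/-- The Banach space `(⊕ₙ ℓ₂ⁿ)_{ℓ_p}`. -/
abbrev SumSpace (p : ℝ) : Type :=
  lp (fun n : ℕ => EuclideanSpace ℝ (Fin (n + 1))) (ENNReal.ofReal p)

/-- The canonical basis of `(⊕ₙ ℓ₂ⁿ)_{ℓ_p}`, indexed by pairs `(n, i)` with
`i < n + 1`: the union of the canonical bases of the summands. -/
def canBasis (p : ℝ) (v : Σ n : ℕ, Fin (n + 1)) : SumSpace p :=
  lp.single (ENNReal.ofReal p) v.1 (EuclideanSpace.single v.2 1)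

open Filter Finset

theorem lp.norm_eq_of_forall_norm_eq {α : Type*} {E : α → Type*}
    [∀ i, NormedAddCommGroup (E i)] {p : ℝ≥0∞} {f g : lp E p} (h : ∀ i, ‖f i‖ = ‖g i‖) :
    ‖f‖ = ‖g‖ := by
  rcases p.trichotomy with rfl | rfl | hp
  · simp only [lp.norm_eq_card_dsupport]
    congr 2
    ext i
    simp only [Set.Finite.mem_toFinset, Set.mem_ofPred_eq]
    rw [← norm_ne_zero_iff, h, norm_ne_zero_iff]
  · simp only [lp.norm_eq_ciSup, h]
  · simp only [lp.norm_eq_tsum_rpow hp, h]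

theorem PiLp.norm_eq_of_forall_norm_eq {ι : Type*} [Fintype ι] {β : ι → Type*}
    [∀ i, SeminormedAddCommGroup (β i)] {p : ℝ≥0∞} {f g : PiLp p β}
    (h : ∀ i, ‖f i‖ = ‖g i‖) : ‖f‖ = ‖g‖ := by
  rcases p.trichotomy with rfl | rfl | hp
  · simp only [PiLp.norm_eq_card, h]
  · simp only [PiLp.norm_eq_ciSup, h]
  · simp only [PiLp.norm_eq_sum hp, h]

def IsDemocratic {ι E : Type*} [SeminormedAddCommGroup E] (x : ι → E) : Prop :=
  ∃ Δ : ℝ, 1 ≤ Δ ∧ ∀ A B : Finset ι, A.card ≤ B.card →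
    ‖∑ k ∈ A, x k‖ ≤ Δ * ‖∑ k ∈ B, x k‖

theorem not_isDemocratic_of_tendsto {ι E : Type*} [SeminormedAddCommGroup E] {x : ι → E}
    (A B : ℕ → Finset ι) (hcard : ∀ N, (A N).card ≤ (B N).card)
    (hratio : Tendsto (fun N => ‖∑ k ∈ A N, x k‖ / ‖∑ k ∈ B N, x k‖) atTop atTop) :
    ¬ IsDemocratic x := by
  rintro ⟨Δ, hΔ, hdem⟩
  obtain ⟨N, hN⟩ := (hratio.eventually_gt_atTop Δ).exists
  exact hN.not_ge (div_le_of_le_mul₀ (norm_nonneg _) (by linarith) (hdem _ _ (hcard N)))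

namespace SumSpace

variable {p : ℝ}

theorem canBasis_apply (v : Σ n : ℕ, Fin (n + 1)) (n : ℕ) (j : Fin (n + 1)) :
    canBasis p v n j = if ⟨n, j⟩ = v then 1 else 0 := by
  obtain ⟨m, i⟩ := v
  rcases eq_or_ne n m with rfl | hnm
  · simp [canBasis, PiLp.single_apply]
  · simp [canBasis, hnm]

theorem sum_smul_canBasis_apply (A : Finset (Σ n : ℕ, Fin (n + 1)))
    (a : (Σ n : ℕ, Fin (n + 1)) → ℝ) (n : ℕ) (j : Fin (n + 1)) :
    (∑ v ∈ A, a v • canBasis p v : SumSpace p) n j = if ⟨n, j⟩ ∈ A then a ⟨n, j⟩ else 0 := by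
  simp only [lp.coeFn_sum, lp.coeFn_smul, Finset.sum_apply, WithLp.ofLp_sum, Pi.smul_apply,
    WithLp.ofLp_smul, smul_eq_mul, canBasis_apply]
  simp [eq_comm]

theorem norm_sum_sign_smul_canBasis (A : Finset (Σ n : ℕ, Fin (n + 1)))
    (a ε : (Σ n : ℕ, Fin (n + 1)) → ℝ) (hε : ∀ v ∈ A, |ε v| = 1) :
    ‖∑ v ∈ A, (ε v * a v) • canBasis p v‖ = ‖∑ v ∈ A, a v • canBasis p v‖ := by
  refine lp.norm_eq_of_forall_norm_eq fun n => PiLp.norm_eq_of_forall_norm_eq fun j => ?_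
  simp only [sum_smul_canBasis_apply]
  split_ifs with h
  · rw [norm_mul, Real.norm_eq_abs (ε _), hε _ h, one_mul]
  · rfl

def block (N : ℕ) : Finset (Σ n : ℕ, Fin (n + 1)) :=
  univ.map ⟨Sigma.mk N, sigma_mk_injective⟩

def firstOfBlocks (N : ℕ) : Finset (Σ n : ℕ, Fin (n + 1)) :=
  (range (N + 1)).map ⟨fun n => ⟨n, 0⟩, fun _ _ h => congrArg Sigma.fst h⟩

theorem card_block (N : ℕ) : (block N).card = N + 1 := by simp [block]

theorem card_firstOfBlocks (N : ℕ) : (firstOfBlocks N).card = N + 1 := by simp [firstOfBlocks]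

variable [Fact ((1 : ℝ≥0∞) ≤ ENNReal.ofReal p)]

theorem exponent_pos : 0 < p := zero_lt_one.trans_le (ENNReal.one_le_ofReal.mp Fact.out)

theorem norm_sum_canBasis_block (N : ℕ) :
    ‖∑ v ∈ block N, canBasis p v‖ = ((N : ℝ) + 1) ^ (2⁻¹ : ℝ) := by
  have hsum : ∑ v ∈ block N, canBasis p v
      = lp.single (ENNReal.ofReal p) N (∑ i : Fin (N + 1), EuclideanSpace.single i (1 : ℝ)) := by
    rw [block, sum_map]
    exact (map_sum (lp.singleAddMonoidHom
      (E := fun n : ℕ => EuclideanSpace ℝ (Fin (n + 1))) (ENNReal.ofReal p) N) _ _).symm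
  rw [hsum, lp.norm_single (ENNReal.ofReal_pos.mpr exponent_pos), EuclideanSpace.norm_eq]
  simp [Real.sqrt_eq_rpow]

theorem norm_sum_canBasis_firstOfBlocks (N : ℕ) :
    ‖∑ v ∈ firstOfBlocks N, canBasis p v‖ = ((N : ℝ) + 1) ^ p⁻¹ := by
  have hp : 0 < p := exponent_pos
  have hpow := lp.norm_sum_single (ENNReal.toReal_ofReal hp.le ▸ hp)
    (fun n : ℕ => EuclideanSpace.single (0 : Fin (n + 1)) (1 : ℝ)) (range (N + 1))
  rw [ENNReal.toReal_ofReal hp.le] at hpow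
  simp only [PiLp.norm_single, norm_one, Real.one_rpow, sum_const, card_range,
    nsmul_eq_mul, mul_one, Nat.cast_add, Nat.cast_one] at hpow
  rw [Real.eq_rpow_inv (norm_nonneg _) (by positivity) hp.ne', firstOfBlocks, sum_map]
  exact hpow

theorem not_isDemocratic_canBasis (hp2 : p ≠ 2) : ¬ IsDemocratic (canBasis p) := by
  have hcard (N : ℕ) : (firstOfBlocks N).card = (block N).card := by
    rw [card_firstOfBlocks, card_block]
  have hpower (s : ℝ) (hs : 0 < s) : Tendsto (fun N : ℕ => ((N : ℝ) + 1) ^ s) atTop atTop :=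
    (tendsto_rpow_atTop hs).comp (tendsto_natCast_atTop_atTop.atTop_add tendsto_const_nhds)
  rcases hp2.lt_or_gt with hlt | hgt
  · refine not_isDemocratic_of_tendsto firstOfBlocks block (fun N => (hcard N).le) ?_
    simp only [norm_sum_canBasis_firstOfBlocks, norm_sum_canBasis_block,
      ← Real.rpow_sub (Nat.cast_add_one_pos _)]
    exact hpower _ (sub_pos.mpr (inv_strictAnti₀ exponent_pos hlt))
  · refine not_isDemocratic_of_tendsto block firstOfBlocks (fun N => (hcard N).ge) ?_
    simp only [norm_sum_canBasis_firstOfBlocks, norm_sum_canBasis_block,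
      ← Real.rpow_sub (Nat.cast_add_one_pos _)]
    exact hpower _ (sub_pos.mpr (inv_strictAnti₀ two_pos hgt))

end SumSpace

theorem stmt14_general (p : ℝ) (hp2 : p ≠ 2)
    [Fact ((1 : ℝ≥0∞) ≤ ENNReal.ofReal p)] :
    (∃ C : ℝ, ∀ (A : Finset (Σ n : ℕ, Fin (n + 1))) (a ε : (Σ n : ℕ, Fin (n + 1)) → ℝ),
      (∀ v ∈ A, |ε v| = 1) →
      ‖∑ v ∈ A, (ε v * a v) • canBasis p v‖ ≤ C * ‖∑ v ∈ A, a v • canBasis p v‖) ∧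
    ¬ ∃ Δ : ℝ, 1 ≤ Δ ∧ ∀ A A' : Finset (Σ n : ℕ, Fin (n + 1)), A.card ≤ A'.card →
      ‖∑ v ∈ A, canBasis p v‖ ≤ Δ * ‖∑ v ∈ A', canBasis p v‖ := by
  refine ⟨⟨1, fun A a ε hε => ?_⟩, SumSpace.not_isDemocratic_canBasis hp2⟩
  rw [one_mul, SumSpace.norm_sum_sign_smul_canBasis A a ε hε]

/-- for `1 < p < ∞`, `p ≠ 2`, the canonical basis of
`(⊕ₙ ℓ₂ⁿ)_{ℓ_p}` is unconditional but not democratic. -/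
theorem stmt14 (p : ℝ) (hp1 : 1 < p) (hp2 : p ≠ 2)
    [Fact ((1 : ℝ≥0∞) ≤ ENNReal.ofReal p)] :
    (∃ C : ℝ, ∀ (A : Finset (Σ n : ℕ, Fin (n + 1))) (a ε : (Σ n : ℕ, Fin (n + 1)) → ℝ),
      (∀ v ∈ A, |ε v| = 1) →
      ‖∑ v ∈ A, (ε v * a v) • canBasis p v‖ ≤ C * ‖∑ v ∈ A, a v • canBasis p v‖) ∧
    ¬ ∃ Δ : ℝ, 1 ≤ Δ ∧ ∀ A A' : Finset (Σ n : ℕ, Fin (n + 1)), A.card ≤ A'.card →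
      ‖∑ v ∈ A, canBasis p v‖ ≤ Δ * ‖∑ v ∈ A', canBasis p v‖ :=
  stmt14_general p hp2
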